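/- Let Q be the output of the Frequent Directions algorithm run on an n×d matrix A with parameter ℓ, and let Δ = ∑_{i=1}^n δ_i. Then for any integer k with 0 ≤ k < ℓ, Δ ≤ ‖A − A_k‖_F² / (ℓ − k). -/

import Mathlib

/-!
With `G_i = (Q^i)ᵀ Q^i`, step `i` adds `a_i a_iᵀ` (the zero last row of `Q^{i-1}` is replaced by
`a_i`) and subtracts `δ_i Y_i Y_iᵀ` (the shrinkage), so `G_n = AᵀA - ∑ δ_i Y_i Y_iᵀ`. Each
`Y_i Y_iᵀ` is an orthogonal projection of rank `ℓ`, so taking traces gives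
`‖Q‖_F² = ‖A‖_F² - ℓΔ`, while evaluating the quadratic form gives `‖Qx‖² ≥ ‖Ax‖² - Δ‖x‖²`.
Summing the latter over the first `k` vectors `v_a` and bounding the sum by `‖Q‖_F²` (Bessel)
yields `(ℓ - k)Δ ≤ ‖A‖_F² - ∑_{a<k} ‖Av_a‖²`.
-/

open Matrix

/-- The squared Euclidean norm of a vector in `ℝ^m`. -/
noncomputable def sqNorm {m : ℕ} (v : Fin m → ℝ) : ℝ := ∑ i, v i ^ 2

/-- The squared Frobenius norm of a real matrix. -/
noncomputable def frobSq {m p : ℕ} (M : Matrix (Fin m) (Fin p) ℝ) : ℝ :=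
  ∑ i, ∑ j, M i j ^ 2

lemma sqNorm_eq_dotProduct {m : ℕ} (v : Fin m → ℝ) : sqNorm v = v ⬝ᵥ v := by
  simp only [sqNorm, dotProduct, sq]

lemma sqNorm_nonneg {m : ℕ} (v : Fin m → ℝ) : 0 ≤ sqNorm v :=
  Finset.sum_nonneg fun _ _ => sq_nonneg _

lemma sqNorm_mulVec {m p : ℕ} (M : Matrix (Fin m) (Fin p) ℝ) (x : Fin p → ℝ) :
    sqNorm (M *ᵥ x) = x ⬝ᵥ (Mᵀ * M) *ᵥ x := by
  rw [sqNorm_eq_dotProduct, ← mulVec_mulVec, dotProduct_mulVec x, vecMul_transpose]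

lemma frobSq_eq_trace {m p : ℕ} (M : Matrix (Fin m) (Fin p) ℝ) :
    frobSq M = trace (Mᵀ * M) := by
  rw [frobSq, Finset.sum_comm]
  simp only [trace, diag, mul_apply, transpose_apply, sq]

lemma sqNorm_transpose_mulVec_le {m p : ℕ} (Y : Matrix (Fin m) (Fin p) ℝ) (hY : Yᵀ * Y = 1)
    (x : Fin m → ℝ) : sqNorm (Yᵀ *ᵥ x) ≤ sqNorm x := by
  set P := 1 - Y * Yᵀ
  have hP : Pᵀ * P = P := by
    simp only [P, transpose_sub, transpose_one, transpose_mul, transpose_transpose, sub_mul,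
      mul_sub, Matrix.one_mul, Matrix.mul_one, Matrix.mul_assoc, ← Matrix.mul_assoc Yᵀ, hY]
    abel
  have := sqNorm_nonneg (P *ᵥ x)
  rw [sqNorm_mulVec, hP, sub_mulVec, one_mulVec, dotProduct_sub] at this
  rw [sqNorm_mulVec, transpose_transpose, sqNorm_eq_dotProduct]
  linarith

lemma transpose_mul_self_eq_sum_vecMulVec {R m p : Type*} [CommSemiring R] [Fintype m]
    (M : Matrix m p R) : Mᵀ * M = ∑ i, vecMulVec (M i) (M i) := by
  ext a b
  simp only [mul_apply, transpose_apply, Matrix.sum_apply, vecMulVec_apply]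

lemma transpose_mul_self_updateRow {R m p : Type*} [CommSemiring R] [Fintype m] [DecidableEq m]
    (M : Matrix m p R) {r : m} (hr : M r = 0) (b : p → R) :
    (M.updateRow r b)ᵀ * M.updateRow r b = Mᵀ * M + vecMulVec b b := by
  rw [transpose_mul_self_eq_sum_vecMulVec, transpose_mul_self_eq_sum_vecMulVec,
    Fintype.sum_eq_add_sum_compl r, Fintype.sum_eq_add_sum_compl r fun i => vecMulVec (M i) (M i),
    updateRow_self, hr, zero_vecMulVec, zero_add, add_comm]
  congr 1
  refine Finset.sum_congr rfl fun i hi => ?_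
  rw [updateRow_ne (by simpa using hi)]

theorem Fin.sum_succ_sub_castSucc {M : Type*} [AddCommGroup M] {n : ℕ} (f : Fin (n + 1) → M) :
    ∑ i : Fin n, (f i.succ - f i.castSucc) = f (Fin.last n) - f 0 := by
  induction n with
  | zero => simp
  | succ n ih =>
    rw [Fin.sum_univ_castSucc]
    simp only [Fin.succ_castSucc]
    rw [ih (fun i => f i.castSucc)]
    simp only [Fin.castSucc_zero, Fin.succ_last]
    abel

lemma transpose_mul_self_diagonal_sqrt_mul {l m d : Type*} [Fintype l] [DecidableEq l]
    [Fintype m] [Fintype d] (Z : Matrix m l ℝ) (hZ : Zᵀ * Z = 1) (s : l → ℝ) (Y : Matrix d l ℝ)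
    {δ : ℝ} (hδ : ∀ j, δ ≤ s j ^ 2) :
    (diagonal (fun j => √(s j ^ 2 - δ)) * Yᵀ)ᵀ * (diagonal (fun j => √(s j ^ 2 - δ)) * Yᵀ) =
      (Z * diagonal s * Yᵀ)ᵀ * (Z * diagonal s * Yᵀ) - δ • (Y * Yᵀ) := by
  set D := diagonal fun j => √(s j ^ 2 - δ)
  have hD : D * D = diagonal s * diagonal s - δ • 1 := by
    ext i j
    rcases eq_or_ne i j with rfl | hij
    · rw [diagonal_mul_diagonal, diagonal_mul_diagonal, Matrix.sub_apply, Matrix.smul_apply,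
        diagonal_apply_eq, diagonal_apply_eq, one_apply_eq, smul_eq_mul, mul_one,
        Real.mul_self_sqrt (sub_nonneg.2 (hδ i)), sq]
    · simp [D, hij]
  calc (D * Yᵀ)ᵀ * (D * Yᵀ) = Y * (D * D) * Yᵀ := by
        simp only [D, transpose_mul, diagonal_transpose, transpose_transpose, Matrix.mul_assoc]
    _ = Y * (diagonal s * diagonal s) * Yᵀ - δ • (Y * Yᵀ) := by
        rw [hD, Matrix.mul_sub, Matrix.sub_mul, Matrix.mul_smul, Matrix.smul_mul, Matrix.mul_one]
    _ = _ := by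
        simp only [transpose_mul, diagonal_transpose, transpose_transpose, Matrix.mul_assoc,
          ← Matrix.mul_assoc Zᵀ, hZ, Matrix.one_mul]

lemma sum_sqNorm_mulVec_le_frobSq {m d p : ℕ} (Q : Matrix (Fin m) (Fin d) ℝ)
    (v : Fin p → Fin d → ℝ) (hv : ∀ a b, v a ⬝ᵥ v b = if a = b then 1 else 0) :
    ∑ a, sqNorm (Q *ᵥ v a) ≤ frobSq Q := by
  have hV : (of v)ᵀᵀ * (of v)ᵀ = 1 := by
    ext a b
    simp only [transpose_transpose, mul_apply, transpose_apply, of_apply, one_apply]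
    exact hv a b
  calc ∑ a, sqNorm (Q *ᵥ v a) = ∑ j, sqNorm ((of v)ᵀᵀ *ᵥ Q j) := by
        simp only [sqNorm, Finset.sum_comm (γ := Fin p), mulVec, transpose_transpose, of_apply,
          dotProduct_comm]
    _ ≤ ∑ j, sqNorm (Q j) := by
        gcongr with j
        exact sqNorm_transpose_mulVec_le _ hV _
    _ = frobSq Q := rfl

section GramCorrection

variable {ι : Type*} [Fintype ι] {n m d ℓ : ℕ} {A : Matrix (Fin n) (Fin d) ℝ}
  {Q : Matrix (Fin m) (Fin d) ℝ} {Y : ι → Matrix (Fin d) (Fin ℓ) ℝ} {δ : ι → ℝ}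

lemma frobSq_eq_of_transpose_mul_self_eq (hY : ∀ i, (Y i)ᵀ * Y i = 1)
    (hQ : Qᵀ * Q = Aᵀ * A - ∑ i, δ i • (Y i * (Y i)ᵀ)) :
    frobSq Q = frobSq A - ℓ * ∑ i, δ i := by
  simp only [frobSq_eq_trace, hQ, trace_sub, trace_sum, trace_smul, trace_mul_comm (Y _), hY,
    trace_one, Fintype.card_fin, smul_eq_mul]
  rw [← Finset.sum_mul, mul_comm]

lemma sqNorm_mulVec_sub_le_of_transpose_mul_self_eq (hY : ∀ i, (Y i)ᵀ * Y i = 1)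
    (hδ : ∀ i, 0 ≤ δ i) (hQ : Qᵀ * Q = Aᵀ * A - ∑ i, δ i • (Y i * (Y i)ᵀ)) (x : Fin d → ℝ) :
    sqNorm (A *ᵥ x) - (∑ i, δ i) * sqNorm x ≤ sqNorm (Q *ᵥ x) := by
  have hcorr : x ⬝ᵥ (∑ i, δ i • (Y i * (Y i)ᵀ)) *ᵥ x ≤ (∑ i, δ i) * sqNorm x := by
    simp only [sum_mulVec, dotProduct_sum, smul_mulVec, dotProduct_smul, smul_eq_mul,
      Finset.sum_mul]
    gcongr with i
    · exact hδ i
    · simpa only [sqNorm_mulVec, transpose_transpose] using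
        sqNorm_transpose_mulVec_le (Y i) (hY i) x
  rw [sqNorm_mulVec Q, hQ, sub_mulVec, dotProduct_sub, ← sqNorm_mulVec]
  linarith

lemma sum_le_div_of_transpose_mul_self_eq (hY : ∀ i, (Y i)ᵀ * Y i = 1)
    (hδ : ∀ i, 0 ≤ δ i) (hQ : Qᵀ * Q = Aᵀ * A - ∑ i, δ i • (Y i * (Y i)ᵀ))
    (v : Fin d → Fin d → ℝ) (hv : ∀ a b, v a ⬝ᵥ v b = if a = b then 1 else 0)
    {k : ℕ} (hk : k < ℓ) :
    ∑ i, δ i ≤ (frobSq A - ∑ a ∈ Finset.univ.filter (fun a : Fin d => (a : ℕ) < k),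
      sqNorm (A *ᵥ v a)) / ((ℓ : ℝ) - k) := by
  set F := Finset.univ.filter (fun a : Fin d => (a : ℕ) < k)
  set Δ := ∑ i, δ i
  have hΔ : 0 ≤ Δ := Finset.sum_nonneg fun i _ => hδ i
  have hF : (F.card : ℝ) ≤ k := by
    rw [Fin.card_filter_val_lt]
    exact_mod_cast min_le_right d k
  have hQF : ∑ a ∈ F, sqNorm (Q *ᵥ v a) ≤ frobSq A - ℓ * Δ := by
    rw [← frobSq_eq_of_transpose_mul_self_eq hY hQ]
    refine le_trans ?_ (sum_sqNorm_mulVec_le_frobSq Q v hv)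
    exact Finset.sum_le_univ_sum_of_nonneg fun a => sqNorm_nonneg _
  have hAF : ∑ a ∈ F, sqNorm (A *ᵥ v a) - F.card * Δ ≤ ∑ a ∈ F, sqNorm (Q *ᵥ v a) := by
    rw [← nsmul_eq_mul, ← Finset.sum_const, ← Finset.sum_sub_distrib]
    gcongr with a
    have hunit : sqNorm (v a) = 1 := by rw [sqNorm_eq_dotProduct, hv, if_pos rfl]
    simpa [hunit] using sqNorm_mulVec_sub_le_of_transpose_mul_self_eq hY hδ hQ (v a)
  rw [le_div_iff₀ (sub_pos.2 (by exact_mod_cast hk))]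
  linarith [mul_le_mul_of_nonneg_right hF hΔ]

end GramCorrection

theorem fd_delta_le_residual_general
    (n d ℓ : ℕ) (hℓ : 0 < ℓ)
    (A : Matrix (Fin n) (Fin d) ℝ)
    (Q : Fin (n + 1) → Matrix (Fin ℓ) (Fin d) ℝ)
    (C : Fin n → Matrix (Fin ℓ) (Fin d) ℝ)
    (Z : Fin n → Matrix (Fin ℓ) (Fin ℓ) ℝ)
    (Y : Fin n → Matrix (Fin d) (Fin ℓ) ℝ)
    (s : Fin n → Fin ℓ → ℝ) (δ : Fin n → ℝ)
    -- the algorithm starts with the zero matrix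
    (hQ0 : Q 0 = 0)
    -- `C i` is `Q^{i-1}` with its last row replaced by the `i`-th row of `A`
    (hC : ∀ i : Fin n,
      C i = (Q i.castSucc).updateRow ⟨ℓ - 1, Nat.sub_lt hℓ Nat.one_pos⟩ (A i))
    -- a singular value decomposition `C i = Z S Yᵀ` of `C i`
    (hZ : ∀ i, (Z i)ᵀ * Z i = 1)
    (hY : ∀ i, (Y i)ᵀ * Y i = 1)
    (hSVD : ∀ i, C i = Z i * Matrix.diagonal (s i) * (Y i)ᵀ)
    (hmono : ∀ i, ∀ j j' : Fin ℓ, j ≤ j' → s i j' ≤ s i j)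
    (hnn : ∀ i j, 0 ≤ s i j)
    -- `δ i` is the square of the smallest singular value of `C i`
    (hδ : ∀ i, δ i = s i ⟨ℓ - 1, Nat.sub_lt hℓ Nat.one_pos⟩ ^ 2)
    -- the shrinking step producing `Q^i = S' Yᵀ`
    (hQs : ∀ i : Fin n,
      Q i.succ = Matrix.diagonal (fun j => Real.sqrt (s i j ^ 2 - δ i)) * (Y i)ᵀ)
    -- `v` is an orthonormal family of right singular vectors of `A`,
    -- ordered by decreasing singular values `σA`
    (v : Fin d → Fin d → ℝ)
    (hv : ∀ a b : Fin d, ∑ t, v a t * v b t = if a = b then 1 else 0)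
    (k : ℕ) (hk : k < ℓ) :
    (∑ i, δ i) ≤
      (frobSq A - ∑ i ∈ Finset.univ.filter (fun i : Fin d => (i : ℕ) < k), sqNorm (A.mulVec (v i))) / ((ℓ : ℝ) - (k : ℝ)) := by
  set r : Fin ℓ := ⟨ℓ - 1, Nat.sub_lt hℓ Nat.one_pos⟩
  have hδle : ∀ i j, δ i ≤ s i j ^ 2 := fun i j => by
    rw [hδ i]
    exact pow_le_pow_left₀ (hnn i r) (hmono i j r (Nat.le_sub_one_of_lt j.isLt)) 2
  have hQr : ∀ i, Q i r = 0 := by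
    refine Fin.cases (by rw [hQ0]; rfl) fun i => ?_
    ext t
    simp [hQs i, diagonal_mul, ← hδ i]
  have hstep : ∀ i : Fin n, (Q i.succ)ᵀ * Q i.succ - (Q i.castSucc)ᵀ * Q i.castSucc =
      vecMulVec (A i) (A i) - δ i • (Y i * (Y i)ᵀ) := fun i => by
    rw [hQs i, transpose_mul_self_diagonal_sqrt_mul (Z i) (hZ i) (s i) (Y i) (hδle i), ← hSVD,
      hC, transpose_mul_self_updateRow _ (hQr _)]
    abel
  have hgram :
      (Q (Fin.last n))ᵀ * Q (Fin.last n) = Aᵀ * A - ∑ i, δ i • (Y i * (Y i)ᵀ) := by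
    have := Fin.sum_succ_sub_castSucc fun i => (Q i)ᵀ * Q i
    rw [hQ0, Matrix.mul_zero, sub_zero] at this
    rw [← this, Finset.sum_congr rfl fun i _ => hstep i, Finset.sum_sub_distrib,
      transpose_mul_self_eq_sum_vecMulVec]
  exact sum_le_div_of_transpose_mul_self_eq hY (fun i => hδ i ▸ sq_nonneg _) hgram v hv hk

/-- Let `Q` be the output of the Frequent Directions algorithm run on an
`n × d` matrix `A` with parameter `ℓ`, and let `Δ = ∑_{i=1}^n δ_i`.  Then for
any integer `k` with `0 ≤ k < ℓ`, `Δ ≤ ‖A - A_k‖_F² / (ℓ - k)`, where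
`‖A - A_k‖_F² = ‖A‖_F² - ∑_{i=1}^k ‖A v_i‖²` for right singular vectors
`v_1, …, v_d` of `A` ordered by decreasing singular values. -/
theorem fd_delta_le_residual
    (n d ℓ : ℕ) (hℓ : 0 < ℓ)
    (A : Matrix (Fin n) (Fin d) ℝ)
    (Q : Fin (n + 1) → Matrix (Fin ℓ) (Fin d) ℝ)
    (C : Fin n → Matrix (Fin ℓ) (Fin d) ℝ)
    (Z : Fin n → Matrix (Fin ℓ) (Fin ℓ) ℝ)
    (Y : Fin n → Matrix (Fin d) (Fin ℓ) ℝ)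
    (s : Fin n → Fin ℓ → ℝ) (δ : Fin n → ℝ)
    -- the algorithm starts with the zero matrix
    (hQ0 : Q 0 = 0)
    -- `C i` is `Q^{i-1}` with its last row replaced by the `i`-th row of `A`
    (hC : ∀ i : Fin n,
      C i = (Q i.castSucc).updateRow ⟨ℓ - 1, Nat.sub_lt hℓ Nat.one_pos⟩ (A i))
    -- a singular value decomposition `C i = Z S Yᵀ` of `C i`
    (hZ : ∀ i, (Z i)ᵀ * Z i = 1)
    (hY : ∀ i, (Y i)ᵀ * Y i = 1)
    (hSVD : ∀ i, C i = Z i * Matrix.diagonal (s i) * (Y i)ᵀ)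
    (hmono : ∀ i, ∀ j j' : Fin ℓ, j ≤ j' → s i j' ≤ s i j)
    (hnn : ∀ i j, 0 ≤ s i j)
    -- `δ i` is the square of the smallest singular value of `C i`
    (hδ : ∀ i, δ i = s i ⟨ℓ - 1, Nat.sub_lt hℓ Nat.one_pos⟩ ^ 2)
    -- the shrinking step producing `Q^i = S' Yᵀ`
    (hQs : ∀ i : Fin n,
      Q i.succ = Matrix.diagonal (fun j => Real.sqrt (s i j ^ 2 - δ i)) * (Y i)ᵀ)
    -- `v` is an orthonormal family of right singular vectors of `A`,
    -- ordered by decreasing singular values `σA`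
    (v : Fin d → Fin d → ℝ) (σA : Fin d → ℝ)
    (hv : ∀ a b : Fin d, ∑ t, v a t * v b t = if a = b then 1 else 0)
    (hσmono : ∀ a b : Fin d, a ≤ b → σA b ≤ σA a)
    (hσnn : ∀ a, 0 ≤ σA a)
    (hAv : ∀ a, (Aᵀ * A).mulVec (v a) = σA a ^ 2 • v a)
    (k : ℕ) (hk : k < ℓ) :
    (∑ i, δ i) ≤
      (frobSq A - ∑ i ∈ Finset.univ.filter (fun i : Fin d => (i : ℕ) < k), sqNorm (A.mulVec (v i))) / ((ℓ : ℝ) - (k : ℝ)) :=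
  fd_delta_le_residual_general n d ℓ hℓ A Q C Z Y s δ hQ0 hC hZ hY hSVD hmono hnn hδ hQs v hv k hk
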